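/- arXiv:1703.05715 — 7 statements merged into one kernel-verified Lean document; each statement's English description precedes it below -/
import Mathlib

section
/- Let W be an n×n matrix with ∑_i W_ij = 0 for all j, and let W_{(i|j)} denote W with row i and column j removed. Then the vector p with p_j = (-1)^{i+j} det W_{(i|j)} (for any fixed i) satisfies W p = 0. -/
/-- For a matrix with zero column sums, the vector of signed
cofactors along any fixed row `i` is a right null vector: `W p = 0`, where
`p j = (-1)^(i+j) det W_(i|j)`. -/
theorem cofactor_vector_is_steady_state {n : ℕ}
    (W : Matrix (Fin (n + 1)) (Fin (n + 1)) ℝ)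
    (hcol : ∀ j : Fin (n + 1), ∑ i : Fin (n + 1), W i j = 0)
    (i : Fin (n + 1)) :
    W.mulVec (fun j : Fin (n + 1) =>
      (-1 : ℝ) ^ ((i : ℕ) + (j : ℕ)) *
        (W.submatrix i.succAbove j.succAbove).det) = 0 := by
  funext k
  show _ = (0:ℝ)
  have key : (W.mulVec (fun j : Fin (n + 1) =>
      (-1 : ℝ) ^ ((i : ℕ) + (j : ℕ)) *
        (W.submatrix i.succAbove j.succAbove).det)) k
      = (W.updateRow i (W k)).det := by
    rw [Matrix.det_succ_row _ i]
    simp only [Matrix.mulVec, dotProduct]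
    refine Finset.sum_congr rfl fun j _ => ?_
    have hsub : (W.updateRow i (W k)).submatrix i.succAbove j.succAbove
        = W.submatrix i.succAbove j.succAbove := by
      ext a b
      simp [Matrix.updateRow_ne (Fin.succAbove_ne i a)]
    rw [hsub, Matrix.updateRow_self]
    ring
  rw [key]
  rcases eq_or_ne k i with rfl | hk
  · rw [Matrix.updateRow_eq_self]
    have : ∃ v ≠ 0, Matrix.vecMul v W = 0 := by
      refine ⟨fun _ => (1 : ℝ), ?_, ?_⟩
      · intro h
        simpa using congrFun h 0
      · funext j
        simpa [Matrix.vecMul, dotProduct] using hcol j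
    rw [← Matrix.exists_vecMul_eq_zero_iff]
    exact this
  · refine Matrix.det_zero_of_row_eq (Ne.symm hk) ?_
    rw [Matrix.updateRow_self, Matrix.updateRow_ne hk]
end

section
/- Let W be an irreducible Markov generator on n states with steady state p (Wp = 0, p entrywise positive), and let W^st be the stalling generator (W with the 1↔2 transition rates removed and diagonal adjusted to keep zero column sums), with positive steady state p^st (W^st p^st = 0). Define the effective rates w̃_{12} = det W^st_{(2|1)}/det W_{(1,2|1,2)} and w̃_{21} = det W^st_{(1|2)}/det W_{(1,2|1,2)}. Then the global detailed-balance condition (W_{21} + w̃_{21})·p_1 = (W_{12} + w̃_{12})·p_2 holds. -/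
/-- A generator is irreducible if any two distinct states are connected by a
chain of transitions with strictly positive rates (column = source state). -/
def MatrixIrreducible {n : ℕ} (W : Matrix (Fin n) (Fin n) ℝ) : Prop :=
  ∀ i j : Fin n, i ≠ j → ∃ k : ℕ, ∃ c : Fin (k + 1) → Fin n,
    c 0 = j ∧ c (Fin.last k) = i ∧
    ∀ m : Fin k, 0 < W (c m.succ) (c m.castSucc)


lemma prop_zero {n : ℕ} (W : Matrix (Fin (n+1)) (Fin (n+1)) ℝ)
    (y : Fin (n+1) → ℝ) (hy : ∀ i, 0 ≤ y i) (hWy : W.mulVec y = 0)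
    (hoff : ∀ i j, i ≠ j → 0 ≤ W i j)
    (a b : Fin (n+1)) (ha : y a = 0) (hab : 0 < W a b) : y b = 0 := by
  by_cases hba : b = a
  · rw [hba, ha]
  · have hsum : ∑ j, W a j * y j = 0 := congrFun hWy a
    have hsplit : ∑ j ∈ Finset.univ.erase a, W a j * y j = 0 := by
      have h2 := Finset.add_sum_erase Finset.univ (fun j => W a j * y j) (Finset.mem_univ a)
      simp only [ha, mul_zero, zero_add] at h2
      rw [h2]; exact hsum
    have hterm : W a b * y b = 0 := by
      refine (Finset.sum_eq_zero_iff_of_nonneg ?_).mp hsplit b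
        (Finset.mem_erase.mpr ⟨hba, Finset.mem_univ b⟩)
      intro j hj
      exact mul_nonneg (hoff a j (Ne.symm (Finset.ne_of_mem_erase hj))) (hy j)
    rcases mul_eq_zero.mp hterm with h | h
    · exact absurd h (ne_of_gt hab)
    · exact h

lemma ker_one_dim {n : ℕ} (W : Matrix (Fin (n+1)) (Fin (n+1)) ℝ)
    (hoff : ∀ i j, i ≠ j → 0 ≤ W i j) (hirr : MatrixIrreducible W)
    (p : Fin (n+1) → ℝ) (hp : ∀ i, 0 < p i) (hWp : W.mulVec p = 0)
    (x : Fin (n+1) → ℝ) (hx : W.mulVec x = 0) :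
    ∃ t : ℝ, x = t • p := by
  obtain ⟨k, -, hk⟩ := Finset.exists_min_image Finset.univ (fun i => x i / p i)
    ⟨0, Finset.mem_univ 0⟩
  set t : ℝ := x k / p k with ht
  set y : Fin (n+1) → ℝ := fun i => x i - t * p i with hy
  have hy0 : ∀ i, 0 ≤ y i := by
    intro i
    have h1 : t ≤ x i / p i := hk i (Finset.mem_univ i)
    have h2 : t * p i ≤ x i := (le_div_iff₀ (hp i)).mp h1
    simp only [hy]; linarith
  have hyk : y k = 0 := by
    simp only [hy, ht]
    rw [div_mul_cancel₀ _ (hp k).ne', sub_self]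
  have hWy : W.mulVec y = 0 := by
    have hxy : y = x - t • p := by funext i; simp [hy]
    rw [hxy, Matrix.mulVec_sub, Matrix.mulVec_smul, hx]
    rw [hWp]; simp
  have hyzero : ∀ i, y i = 0 := by
    intro i
    by_cases hik : i = k
    · rw [hik]; exact hyk
    · obtain ⟨kk, c, hc0, hcl, hcpos⟩ := hirr k i (fun h => hik h.symm)
      have key : ∀ d : ℕ, ∀ h : d ≤ kk, y (c ⟨kk - d, by omega⟩) = 0 := by
        intro d
        induction d with
        | zero =>
          intro _
          have : (⟨kk - 0, by omega⟩ : Fin (kk+1)) = Fin.last kk := by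
            ext; simp
          rw [this, hcl]; exact hyk
        | succ d ih =>
          intro h
          have h1 := ih (by omega)
          set mm : Fin kk := ⟨kk - (d+1), by omega⟩ with hmm
          have hms : mm.succ = (⟨kk - d, by omega⟩ : Fin (kk+1)) := by
            ext; simp [hmm, Fin.succ]; omega
          have hmc : mm.castSucc = (⟨kk - (d+1), by omega⟩ : Fin (kk+1)) := rfl
          have hz : y (c mm.succ) = 0 := by rw [hms]; exact h1
          have := prop_zero W y hy0 hWy hoff (c mm.succ) (c mm.castSucc) hz (hcpos mm)
          rw [hmc] at this
          exact this
      have := key kk (le_refl kk)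
      simp only [Nat.sub_self] at this
      rw [show (⟨0, by omega⟩ : Fin (kk+1)) = 0 from rfl, hc0] at this
      exact this
  refine ⟨t, funext fun i => ?_⟩
  have := hyzero i
  simp only [hy] at this
  simp [Pi.smul_apply, smul_eq_mul]
  linarith

lemma cofactor_ker {n : ℕ} (W : Matrix (Fin (n+1)) (Fin (n+1)) ℝ) (hdet0 : W.det = 0) :
    W.mulVec (fun j => (-1:ℝ)^(j:ℕ) * (W.submatrix Fin.succ j.succAbove).det) = 0 := by
  funext k
  have hM : ∀ j : Fin (n+1),
      (W.updateRow 0 (W k)).submatrix Fin.succ j.succAbove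
        = W.submatrix Fin.succ j.succAbove := by
    intro j
    ext i l
    simp [Matrix.updateRow_ne (Fin.succ_ne_zero i)]
  have hexp := Matrix.det_succ_row_zero (W.updateRow 0 (W k))
  simp only [Matrix.updateRow_self, hM] at hexp
  have hdetM : (W.updateRow 0 (W k)).det = 0 := by
    by_cases hk : k = 0
    · rw [hk, Matrix.updateRow_eq_self]; exact hdet0
    · exact Matrix.det_zero_of_row_eq (Ne.symm hk)
        (by rw [Matrix.updateRow_self, Matrix.updateRow_ne hk])
  rw [hdetM] at hexp
  show ∑ j, W k j * ((-1:ℝ)^(j:ℕ) * (W.submatrix Fin.succ j.succAbove).det) = 0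
  have heq : ∑ j, W k j * ((-1:ℝ)^(j:ℕ) * (W.submatrix Fin.succ j.succAbove).det)
      = ∑ j : Fin (n+1), (-1:ℝ)^(j:ℕ) * W k j * (W.submatrix Fin.succ j.succAbove).det :=
    Finset.sum_congr rfl fun j _ => by ring
  rw [heq, ← hexp]

-- determinants of matrices differing in one corner entry
lemma det_corner {n : ℕ} (M N : Matrix (Fin (n+1)) (Fin (n+1)) ℝ)
    (h : ∀ i j, ¬(i = 0 ∧ j = 0) → M i j = N i j) :
    M.det = N.det + (M 0 0 - N 0 0) * (M.submatrix Fin.succ Fin.succ).det := by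
  have hmin : ∀ j : Fin (n+1), M.submatrix Fin.succ j.succAbove
      = N.submatrix Fin.succ j.succAbove := by
    intro j
    ext i l
    exact h _ _ (fun hc => Fin.succ_ne_zero i hc.1)
  rw [Matrix.det_succ_row_zero M, Matrix.det_succ_row_zero N,
    Fin.sum_univ_succ, Fin.sum_univ_succ]
  have htail : ∀ i : Fin n, (-1:ℝ)^((i.succ:Fin (n+1)):ℕ) * M 0 i.succ *
      (M.submatrix Fin.succ (Fin.succAbove i.succ)).det
      = (-1:ℝ)^((i.succ:Fin (n+1)):ℕ) * N 0 i.succ *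
      (N.submatrix Fin.succ (Fin.succAbove i.succ)).det := by
    intro i
    rw [hmin, h 0 i.succ (fun hc => Fin.succ_ne_zero i hc.2)]
  rw [Finset.sum_congr rfl (fun i _ => htail i)]
  have h0 : (Fin.succAbove (0 : Fin (n+1))) = Fin.succ := Fin.succAbove_zero
  rw [hmin 0, h0]
  have : (N.submatrix Fin.succ Fin.succ) = (M.submatrix Fin.succ Fin.succ) := by
    ext i l; exact (h _ _ (fun hc => Fin.succ_ne_zero i hc.1)).symm
  rw [this]
  simp only [Fin.val_zero, pow_zero]
  ring

lemma det_row01 {n : ℕ} (W : Matrix (Fin (n+2)) (Fin (n+2)) ℝ)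
    (hcol : ∀ j, ∑ i, W i j = 0) :
    (W.submatrix (Fin.succAbove 1) (Fin.succAbove 0)).det
      = -(W.submatrix (Fin.succAbove 0) (Fin.succAbove 0)).det := by
  set B0 := W.submatrix (Fin.succAbove 0) (Fin.succAbove 0) with hB0
  have hrow : W.submatrix (Fin.succAbove 1) (Fin.succAbove 0)
      = B0.updateRow 0 (∑ k, (fun _ : Fin (n+1) => (-1:ℝ)) k • B0 k) := by
    ext i l
    by_cases hi : i = 0
    · subst hi
      rw [Matrix.updateRow_self]
      have hsumval : (∑ k, (fun _ : Fin (n+1) => (-1:ℝ)) k • B0 k) l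
          = ∑ k : Fin (n+1), -(W k.succ l.succ) := by
        simp [hB0, Matrix.submatrix_apply, Fin.succAbove_zero]
      rw [hsumval]
      have hc := hcol (Fin.succ l)
      rw [Fin.sum_univ_succ] at hc
      have : ∑ k : Fin (n+1), -(W k.succ l.succ) = W 0 l.succ := by
        rw [Finset.sum_neg_distrib]
        linarith [hc]
      rw [this]
      simp [Matrix.submatrix_apply, Fin.one_succAbove_zero, Fin.succAbove_zero]
    · rw [Matrix.updateRow_ne hi]
      have h1 : (1 : Fin (n+2)).succAbove i = i.succ := by
        apply Fin.succAbove_of_le_castSucc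
        rw [Fin.le_def]
        simp only [Fin.val_one, Fin.coe_castSucc]
        have := Fin.pos_of_ne_zero hi
        omega
      simp [hB0, Matrix.submatrix_apply, h1, Fin.succAbove_zero]
  rw [hrow, Matrix.det_updateRow_sum]
  simp

/-- Theorem 1: for an irreducible Markov generator `W` with
positive steady state `p`, and stalling generator `Wst` with positive steady
state `pst`, the effective rates `w̃₁₂ = det Wst_(2|1) / det W_(1,2|1,2)` and
`w̃₂₁ = det Wst_(1|2) / det W_(1,2|1,2)` satisfy the global detailed-balance
condition `(W₂₁ + w̃₂₁) p₁ = (W₁₂ + w̃₁₂) p₂`. States `1,2` are indices `0,1`. -/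
theorem effective_rates_detailed_balance {m : ℕ}
    (W Wst : Matrix (Fin (m + 3)) (Fin (m + 3)) ℝ)
    (hoff : ∀ i j : Fin (m + 3), i ≠ j → 0 ≤ W i j)
    (hcol : ∀ j : Fin (m + 3), ∑ i : Fin (m + 3), W i j = 0)
    (hirr : MatrixIrreducible W)
    (p pst : Fin (m + 3) → ℝ)
    (hp : ∀ i, 0 < p i) (hsteady : W.mulVec p = 0)
    (h12 : Wst 0 1 = 0) (h21 : Wst 1 0 = 0)
    (h11 : Wst 0 0 = W 0 0 + W 1 0) (h22 : Wst 1 1 = W 1 1 + W 0 1)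
    (hother : ∀ i j : Fin (m + 3),
      ¬((i = 0 ∧ j = 1) ∨ (i = 1 ∧ j = 0) ∨ (i = 0 ∧ j = 0) ∨ (i = 1 ∧ j = 1)) →
      Wst i j = W i j)
    (hpst : ∀ i, 0 < pst i) (hstst : Wst.mulVec pst = 0)
    (hdet : (W.submatrix (fun k : Fin (m + 1) => k.succ.succ)
      (fun k : Fin (m + 1) => k.succ.succ)).det ≠ 0) :
    (W 1 0 + (Wst.submatrix (Fin.succAbove 0) (Fin.succAbove 1)).det /
        (W.submatrix (fun k : Fin (m + 1) => k.succ.succ)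
          (fun k : Fin (m + 1) => k.succ.succ)).det) * p 0 =
    (W 0 1 + (Wst.submatrix (Fin.succAbove 1) (Fin.succAbove 0)).det /
        (W.submatrix (fun k : Fin (m + 1) => k.succ.succ)
          (fun k : Fin (m + 1) => k.succ.succ)).det) * p 1 := by
  -- basic Fin facts
  have hsA1succ : ∀ i : Fin (m+2), i ≠ 0 → (1 : Fin (m+3)).succAbove i = i.succ := by
    intro i hi
    apply Fin.succAbove_of_le_castSucc
    rw [Fin.le_def]
    simp only [Fin.val_one, Fin.coe_castSucc]
    have := Fin.pos_of_ne_zero hi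
    omega
  have hsA10 : (1 : Fin (m+3)).succAbove 0 = 0 := Fin.one_succAbove_zero
  have hsucc1 : ∀ i : Fin (m+2), i ≠ 0 → (i.succ : Fin (m+3)) ≠ 0 ∧ (i.succ : Fin (m+3)) ≠ 1 := by
    intro i hi
    constructor
    · exact Fin.succ_ne_zero i
    · intro h
      apply hi
      have : (i.succ : Fin (m+3)).val = 1 := by rw [h]; rfl
      have h2 : i.val + 1 = 1 := this
      ext
      simpa using h2
  set A := W.submatrix (fun k : Fin (m + 1) => k.succ.succ) (fun k : Fin (m + 1) => k.succ.succ)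
    with hA
  -- det W = 0
  have hdetW : W.det = 0 := by
    rw [← Matrix.exists_mulVec_eq_zero_iff]
    exact ⟨p, fun h => (hp 0).ne' (by simpa using congrFun h 0), hsteady⟩
  -- cofactor vector
  set q : Fin (m+3) → ℝ :=
    fun j => (-1:ℝ)^(j:ℕ) * (W.submatrix Fin.succ j.succAbove).det with hqdef
  have hq : W.mulVec q = 0 := cofactor_ker W hdetW
  obtain ⟨t, hqt⟩ := ker_one_dim W hoff hirr p hp hsteady q hq
  have hq0 : (W.submatrix Fin.succ ((0 : Fin (m+3)).succAbove)).det = t * p 0 := by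
    have := congrFun hqt 0
    simpa [hqdef] using this
  have hq1 : (W.submatrix Fin.succ ((1 : Fin (m+3)).succAbove)).det = -(t * p 1) := by
    have := congrFun hqt 1
    simp only [hqdef, Pi.smul_apply, smul_eq_mul] at this
    have h1 : ((1 : Fin (m+3)) : ℕ) = 1 := rfl
    rw [h1, pow_one] at this
    linarith
  -- corner decomposition for (0|1) minor
  have hM1 : (W.submatrix (Fin.succAbove 0) (Fin.succAbove 1)).det
      = (Wst.submatrix (Fin.succAbove 0) (Fin.succAbove 1)).det + W 1 0 * A.det := by
    have hco := det_corner (W.submatrix (Fin.succAbove 0) (Fin.succAbove 1))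
      (Wst.submatrix (Fin.succAbove 0) (Fin.succAbove 1)) ?_
    · have h00 : (W.submatrix (Fin.succAbove 0) (Fin.succAbove 1)) 0 0 = W 1 0 := by
        simp [Matrix.submatrix_apply, hsA10]
      have h00' : (Wst.submatrix (Fin.succAbove 0) (Fin.succAbove 1)) 0 0 = 0 := by
        simp [Matrix.submatrix_apply, hsA10, h21]
      have hsub : ((W.submatrix (Fin.succAbove 0) (Fin.succAbove 1)).submatrix
          Fin.succ Fin.succ) = A := by
        ext i j
        simp [Matrix.submatrix_apply, hA, hsA1succ j.succ (Fin.succ_ne_zero j)]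
      rw [h00, h00', hsub, sub_zero] at hco
      exact hco
    · intro i j hij
      simp only [Matrix.submatrix_apply]
      apply (hother _ _ _).symm
      by_cases hi : i = 0
      · have hj : j ≠ 0 := fun h => hij ⟨hi, h⟩
        subst hi
        have hcolv := hsucc1 j hj
        rw [hsA1succ j hj]
        rintro (⟨-, h⟩ | ⟨-, h⟩ | ⟨-, h⟩ | ⟨-, h⟩)
        · exact hcolv.2 h
        · exact hcolv.1 h
        · exact hcolv.1 h
        · exact hcolv.2 h
      · have hrow := hsucc1 i hi
        simp only [Fin.succAbove_zero]
        rintro (⟨h, -⟩ | ⟨h, -⟩ | ⟨h, -⟩ | ⟨h, -⟩)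
        · exact hrow.1 h
        · exact hrow.2 h
        · exact hrow.1 h
        · exact hrow.2 h
  -- corner decomposition for (1|0) minor
  have hM2 : (W.submatrix (Fin.succAbove 1) (Fin.succAbove 0)).det
      = (Wst.submatrix (Fin.succAbove 1) (Fin.succAbove 0)).det + W 0 1 * A.det := by
    have hco := det_corner (W.submatrix (Fin.succAbove 1) (Fin.succAbove 0))
      (Wst.submatrix (Fin.succAbove 1) (Fin.succAbove 0)) ?_
    · have h00 : (W.submatrix (Fin.succAbove 1) (Fin.succAbove 0)) 0 0 = W 0 1 := by
        simp [Matrix.submatrix_apply, hsA10]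
      have h00' : (Wst.submatrix (Fin.succAbove 1) (Fin.succAbove 0)) 0 0 = 0 := by
        simp [Matrix.submatrix_apply, hsA10, h12]
      have hsub : ((W.submatrix (Fin.succAbove 1) (Fin.succAbove 0)).submatrix
          Fin.succ Fin.succ) = A := by
        ext i j
        simp [Matrix.submatrix_apply, hA, hsA1succ i.succ (Fin.succ_ne_zero i)]
      rw [h00, h00', hsub, sub_zero] at hco
      exact hco
    · intro i j hij
      simp only [Matrix.submatrix_apply]
      apply (hother _ _ _).symm
      by_cases hj : j = 0
      · have hi : i ≠ 0 := fun h => hij ⟨h, hj⟩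
        subst hj
        have hrow := hsucc1 i hi
        rw [hsA1succ i hi]
        rintro (⟨h, -⟩ | ⟨h, -⟩ | ⟨h, -⟩ | ⟨h, -⟩)
        · exact hrow.1 h
        · exact hrow.2 h
        · exact hrow.1 h
        · exact hrow.2 h
      · have hcolv := hsucc1 j hj
        simp only [Fin.succAbove_zero]
        rintro (⟨-, h⟩ | ⟨-, h⟩ | ⟨-, h⟩ | ⟨-, h⟩)
        · exact hcolv.2 h
        · exact hcolv.1 h
        · exact hcolv.1 h
        · exact hcolv.2 h
  -- relate the two W minors to q
  have hrel1 : (W.submatrix (Fin.succAbove 0) (Fin.succAbove 1)).det = -(t * p 1) := by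
    rw [show (Fin.succAbove (0 : Fin (m+3))) = Fin.succ from rfl]
    exact hq1
  have hrel2 : (W.submatrix (Fin.succAbove 1) (Fin.succAbove 0)).det = -(t * p 0) := by
    rw [det_row01 W hcol]
    exact congrArg Neg.neg hq0
  -- finish
  have e1 : (Wst.submatrix (Fin.succAbove 0) (Fin.succAbove 1)).det
      = -(t * p 1) - W 1 0 * A.det := by linarith [hM1, hrel1]
  have e2 : (Wst.submatrix (Fin.succAbove 1) (Fin.succAbove 0)).det
      = -(t * p 0) - W 0 1 * A.det := by linarith [hM2, hrel2]
  rw [e1, e2]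
  field_simp
  ring
end

section
/- Let W be a Markov generator on n ≥ 3 states, W^st the stalling generator obtained by zeroing the (1,2) and (2,1) off-diagonal entries and adjusting the diagonal so column sums remain zero, and p^st > 0 a steady state of W^st with P_st = diag(p^st). Define W̃ := W − W^st + P_st (W^st)ᵀ P_st⁻¹. Then W̃ is a Markov generator: its off-diagonal entries are nonnegative, its columns sum to zero, and its diagonal entries coincide with those of W. -/
/-! The reversal `P Aᵀ P⁻¹` of a generator `A` with positive steady state `p` (`P = diag p`) is
again a generator with the same diagonal: stationarity of `p` is exactly what makes its columns
sum to zero. The stalling generator `Wst` only moves the rates between states `a` and `b` onto the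
diagonal, so `Wst` is itself a generator, and `W - Wst` has column sums zero and off-diagonal
entries `0` or `W a b`, `W b a`. Hence `W̃ = (W - Wst) + P Wstᵀ P⁻¹` is a generator whose diagonal
is that of `W - Wst + Wst = W`. -/

namespace Matrix

variable {ι : Type*}

structure IsGenerator [Fintype ι] (A : Matrix ι ι ℝ) : Prop where
  offDiag_nonneg : ∀ i j, i ≠ j → 0 ≤ A i j
  sum_col_eq_zero : ∀ j, ∑ i, A i j = 0

section TimeReversal

variable [Fintype ι] [DecidableEq ι]

noncomputable def timeReversal (p : ι → ℝ) (A : Matrix ι ι ℝ) : Matrix ι ι ℝ :=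
  diagonal p * Aᵀ * diagonal (fun i => (p i)⁻¹)

theorem timeReversal_apply (p : ι → ℝ) (A : Matrix ι ι ℝ) (i j : ι) :
    timeReversal p A i j = p i * A j i * (p j)⁻¹ := by
  simp [timeReversal, mul_diagonal, diagonal_mul]

theorem timeReversal_apply_self {p : ι → ℝ} (A : Matrix ι ι ℝ) {i : ι} (hp : p i ≠ 0) :
    timeReversal p A i i = A i i := by
  rw [timeReversal_apply, mul_comm (p i), mul_assoc, mul_inv_cancel₀ hp, mul_one]

theorem IsGenerator.timeReversal {A : Matrix ι ι ℝ} (hA : IsGenerator A) {p : ι → ℝ}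
    (hp : ∀ i, 0 < p i) (hstat : A *ᵥ p = 0) : IsGenerator (timeReversal p A) where
  offDiag_nonneg i j hij := by
    rw [timeReversal_apply]
    exact mul_nonneg (mul_nonneg (hp i).le (hA.offDiag_nonneg j i hij.symm)) (inv_nonneg.2 (hp j).le)
  sum_col_eq_zero j := calc
    ∑ i, Matrix.timeReversal p A i j = (A *ᵥ p) j * (p j)⁻¹ := by
      simp only [timeReversal_apply, mulVec, dotProduct, Finset.sum_mul]
      exact Finset.sum_congr rfl fun i _ => by ring
    _ = 0 := by rw [hstat, Pi.zero_apply, zero_mul]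

end TimeReversal

structure IsStalling (W Wst : Matrix ι ι ℝ) (a b : ι) : Prop where
  apply_left_right : Wst a b = 0
  apply_right_left : Wst b a = 0
  apply_left_left : Wst a a = W a a + W b a
  apply_right_right : Wst b b = W b b + W a b
  apply_of_ne : ∀ i j, ¬((i = a ∧ j = b) ∨ (i = b ∧ j = a) ∨ (i = a ∧ j = a) ∨ (i = b ∧ j = b)) →
    Wst i j = W i j

namespace IsStalling

variable {W Wst : Matrix ι ι ℝ} {a b : ι}

theorem apply_eq_zero_or_eq (hS : Matrix.IsStalling W Wst a b) {i j : ι} (hij : i ≠ j) :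
    Wst i j = 0 ∨ Wst i j = W i j := by
  by_cases h : (i = a ∧ j = b) ∨ (i = b ∧ j = a)
  · rcases h with ⟨rfl, rfl⟩ | ⟨rfl, rfl⟩
    · exact .inl hS.apply_left_right
    · exact .inl hS.apply_right_left
  · refine .inr (hS.apply_of_ne i j ?_)
    rintro (h' | h' | ⟨rfl, rfl⟩ | ⟨rfl, rfl⟩) <;> tauto

theorem apply_row_of_ne (hS : Matrix.IsStalling W Wst a b) {i : ι} (hia : i ≠ a) (hib : i ≠ b)
    (j : ι) : Wst i j = W i j :=
  hS.apply_of_ne i j (by tauto)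

theorem apply_col_of_ne (hS : Matrix.IsStalling W Wst a b) {j : ι} (hja : j ≠ a) (hjb : j ≠ b)
    (i : ι) : Wst i j = W i j :=
  hS.apply_of_ne i j (by tauto)

theorem isGenerator [Fintype ι] (hS : Matrix.IsStalling W Wst a b) (hab : a ≠ b) (hW : Matrix.IsGenerator W) :
    IsGenerator Wst where
  offDiag_nonneg i j hij := by
    rcases hS.apply_eq_zero_or_eq hij with h | h <;> rw [h]
    exact hW.offDiag_nonneg i j hij
  sum_col_eq_zero j := by
    have hdiff : ∑ i, (Wst i j - W i j) = (Wst a j - W a j) + (Wst b j - W b j) :=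
      Fintype.sum_eq_add a b hab fun i ⟨hia, hib⟩ => by rw [hS.apply_row_of_ne hia hib, sub_self]
    have hsplit : ∑ i, Wst i j = ∑ i, W i j + ∑ i, (Wst i j - W i j) := by
      rw [← Finset.sum_add_distrib]
      exact Finset.sum_congr rfl fun i _ => by ring
    rw [hsplit, hW.sum_col_eq_zero, hdiff]
    by_cases hja : j = a
    · subst hja
      rw [hS.apply_left_left, hS.apply_right_left]
      ring
    by_cases hjb : j = b
    · subst hjb
      rw [hS.apply_left_right, hS.apply_right_right]
      ring
    rw [hS.apply_col_of_ne hja hjb, hS.apply_col_of_ne hja hjb]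
    ring

theorem sub_apply_nonneg [Fintype ι] (hS : Matrix.IsStalling W Wst a b) (hW : Matrix.IsGenerator W) {i j : ι}
    (hij : i ≠ j) : 0 ≤ (W - Wst) i j := by
  rcases hS.apply_eq_zero_or_eq hij with h | h <;> rw [sub_apply, h]
  · rw [sub_zero]
    exact hW.offDiag_nonneg i j hij
  · rw [sub_self]

end IsStalling

end Matrix

/-- Theorem 2: the hidden time-reversal operator
`W̃ = W − Wst + Pst Wstᵀ Pst⁻¹` is a genuine Markov generator: nonnegative
off-diagonal entries, zero column sums, and the same diagonal as `W`.
States `1,2` are indices `0,1`. -/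
theorem HTR_is_generator {m : ℕ}
    (W Wst : Matrix (Fin (m + 3)) (Fin (m + 3)) ℝ)
    (hoff : ∀ i j : Fin (m + 3), i ≠ j → 0 ≤ W i j)
    (hcol : ∀ j : Fin (m + 3), ∑ i : Fin (m + 3), W i j = 0)
    (h12 : Wst 0 1 = 0) (h21 : Wst 1 0 = 0)
    (h11 : Wst 0 0 = W 0 0 + W 1 0) (h22 : Wst 1 1 = W 1 1 + W 0 1)
    (hother : ∀ i j : Fin (m + 3),
      ¬((i = 0 ∧ j = 1) ∨ (i = 1 ∧ j = 0) ∨ (i = 0 ∧ j = 0) ∨ (i = 1 ∧ j = 1)) →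
      Wst i j = W i j)
    (pst : Fin (m + 3) → ℝ) (hpst : ∀ i, 0 < pst i)
    (hsteady : Wst.mulVec pst = 0) :
    (∀ i j : Fin (m + 3), i ≠ j → 0 ≤
      (W - Wst + Matrix.diagonal pst * Wst.transpose *
        Matrix.diagonal (fun i => (pst i)⁻¹)) i j) ∧
    (∀ j : Fin (m + 3), ∑ i : Fin (m + 3),
      (W - Wst + Matrix.diagonal pst * Wst.transpose *
        Matrix.diagonal (fun i => (pst i)⁻¹)) i j = 0) ∧
    (∀ i : Fin (m + 3),
      (W - Wst + Matrix.diagonal pst * Wst.transpose *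
        Matrix.diagonal (fun i => (pst i)⁻¹)) i i = W i i) := by
  have hW : Matrix.IsGenerator W := ⟨hoff, hcol⟩
  have hS : Matrix.IsStalling W Wst 0 1 := ⟨h12, h21, h11, h22, hother⟩
  have hst : Matrix.IsGenerator Wst := hS.isGenerator Fin.zero_ne_one hW
  have hrev : Matrix.IsGenerator (Matrix.timeReversal pst Wst) := hst.timeReversal hpst hsteady
  change (∀ i j, i ≠ j → 0 ≤ (W - Wst + Matrix.timeReversal pst Wst) i j) ∧
    (∀ j, ∑ i, (W - Wst + Matrix.timeReversal pst Wst) i j = 0) ∧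
    (∀ i, (W - Wst + Matrix.timeReversal pst Wst) i i = W i i)
  refine ⟨fun i j hij => ?_, fun j => ?_, fun i => ?_⟩
  · exact add_nonneg (hS.sub_apply_nonneg hW hij) (hrev.offDiag_nonneg i j hij)
  · simp only [Matrix.add_apply, Matrix.sub_apply, Finset.sum_add_distrib, Finset.sum_sub_distrib,
      hW.sum_col_eq_zero, hst.sum_col_eq_zero, hrev.sum_col_eq_zero, sub_zero, add_zero]
  · rw [Matrix.add_apply, Matrix.sub_apply, Matrix.timeReversal_apply_self Wst (hpst i).ne', sub_add_cancel]
end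

section
/- Let W be an irreducible Markov generator with all edge rates positive along a connected graph, and let W̃ be the HTR generator built from the stalling steady state p^st. For any cycle C = (i_0, i_1, …, i_k = i_0) of distinct consecutive states none of whose edges is {1,2}, the cycle affinity reverses sign: ∑_{m} log( W̃_{i_{m+1} i_m} / W̃_{i_m i_{m+1}} ) = − ∑_m log( W_{i_{m+1} i_m} / W_{i_m i_{m+1}} ). -/
theorem Fin.sum_succ_sub_castSucc {G : Type*} [AddCommGroup G] :
    ∀ {k : ℕ} (f : Fin (k + 1) → G),
      ∑ s : Fin k, (f s.succ - f s.castSucc) = f (Fin.last k) - f 0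
  | 0, f => by simp
  | k + 1, f => by
    rw [Fin.sum_univ_castSucc]
    simp only [Fin.succ_castSucc, Fin.succ_last]
    rw [Fin.sum_succ_sub_castSucc (fun s => f s.castSucc), Fin.castSucc_zero]
    abel

/-- As in `MatrixIrreducible`, `W i j` is the rate of the jump `j → i`. -/
noncomputable def cycleAffinity {α : Type*} {k : ℕ} (W : Matrix α α ℝ) (c : Fin (k + 1) → α) :
    ℝ :=
  ∑ s : Fin k, Real.log (W (c s.succ) (c s.castSucc) / W (c s.castSucc) (c s.succ))

theorem log_reversed_rate_ratio {a b p q : ℝ} (ha : 0 < a) (hb : 0 < b) (hp : 0 < p)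
    (hq : 0 < q) :
    Real.log (b * p / q / (a * q / p)) = -Real.log (a / b) + 2 * (Real.log p - Real.log q) := by
  have hratio : b * p / q / (a * q / p) = (a / b)⁻¹ * (p / q) ^ 2 := by
    field_simp
  rw [hratio, Real.log_mul (by positivity) (by positivity), Real.log_inv, Real.log_pow,
    Real.log_div hp.ne' hq.ne']
  push_cast
  ring

theorem cycleAffinity_eq_neg_of_reversal {α : Type*} {k : ℕ} (W Wt : Matrix α α ℝ)
    (p : α → ℝ) (hp : ∀ i, 0 < p i) (c : Fin (k + 1) → α) (hcyc : c (Fin.last k) = c 0)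
    (hfwd : ∀ s : Fin k,
      Wt (c s.succ) (c s.castSucc) = W (c s.castSucc) (c s.succ) * p (c s.succ) / p (c s.castSucc))
    (hbwd : ∀ s : Fin k,
      Wt (c s.castSucc) (c s.succ) = W (c s.succ) (c s.castSucc) * p (c s.castSucc) / p (c s.succ))
    (hposfwd : ∀ s : Fin k, 0 < W (c s.succ) (c s.castSucc))
    (hposbwd : ∀ s : Fin k, 0 < W (c s.castSucc) (c s.succ)) :
    cycleAffinity Wt c = -cycleAffinity W c := by
  let φ : Fin (k + 1) → ℝ := fun s => Real.log (p (c s))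
  calc cycleAffinity Wt c
      = ∑ s : Fin k, (-Real.log (W (c s.succ) (c s.castSucc) / W (c s.castSucc) (c s.succ))
          + 2 * (φ s.succ - φ s.castSucc)) := by
        refine Finset.sum_congr rfl fun s _ => ?_
        rw [hfwd, hbwd]
        exact log_reversed_rate_ratio (hposfwd s) (hposbwd s) (hp _) (hp _)
    _ = -cycleAffinity W c + 2 * (φ (Fin.last k) - φ 0) := by
        rw [Finset.sum_add_distrib, Finset.sum_neg_distrib, ← Finset.mul_sum,
          Fin.sum_succ_sub_castSucc]
        rfl
    _ = -cycleAffinity W c := by simp [φ, hcyc]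

theorem HTR_cycle_affinity_reversal_general {m : ℕ}
    (W Wtil : Matrix (Fin (m + 3)) (Fin (m + 3)) ℝ)
    (pst : Fin (m + 3) → ℝ) (hpst : ∀ i, 0 < pst i)
    (hWtil : ∀ i j : Fin (m + 3), i ≠ j →
      ¬((i = 0 ∧ j = 1) ∨ (i = 1 ∧ j = 0)) →
      Wtil i j = W j i * pst i / pst j)
    (k : ℕ) (c : Fin (k + 1) → Fin (m + 3))
    (hcyc : c (Fin.last k) = c 0)
    (hdist : ∀ s : Fin k, c s.castSucc ≠ c s.succ)
    (hnoedge : ∀ s : Fin k,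
      ¬((c s.castSucc = 0 ∧ c s.succ = 1) ∨ (c s.castSucc = 1 ∧ c s.succ = 0)))
    (hposfwd : ∀ s : Fin k, 0 < W (c s.succ) (c s.castSucc))
    (hposbwd : ∀ s : Fin k, 0 < W (c s.castSucc) (c s.succ)) :
    ∑ s : Fin k, Real.log (Wtil (c s.succ) (c s.castSucc) /
        Wtil (c s.castSucc) (c s.succ)) =
    - ∑ s : Fin k, Real.log (W (c s.succ) (c s.castSucc) /
        W (c s.castSucc) (c s.succ)) :=
  cycleAffinity_eq_neg_of_reversal W Wtil pst hpst c hcyc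
    (fun s => hWtil _ _ (hdist s).symm fun h => hnoedge s (by tauto))
    (fun s => hWtil _ _ (hdist s) (hnoedge s)) hposfwd hposbwd

/-- Theorem 5a: along any cycle not containing the observable
edge `{1,2}` (indices `{0,1}`), the cycle affinity of the HTR generator `W̃`
(with `W̃_ij = W_ji pst_i / pst_j` off the observable edge) is the opposite of
that of `W`. -/
theorem HTR_cycle_affinity_reversal {m : ℕ}
    (W Wtil : Matrix (Fin (m + 3)) (Fin (m + 3)) ℝ)
    (hoff : ∀ i j : Fin (m + 3), i ≠ j → 0 ≤ W i j)
    (hcol : ∀ j : Fin (m + 3), ∑ i : Fin (m + 3), W i j = 0)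
    (hirr : MatrixIrreducible W)
    (pst : Fin (m + 3) → ℝ) (hpst : ∀ i, 0 < pst i)
    (hWtil12 : Wtil 0 1 = W 0 1) (hWtil21 : Wtil 1 0 = W 1 0)
    (hWtil : ∀ i j : Fin (m + 3), i ≠ j →
      ¬((i = 0 ∧ j = 1) ∨ (i = 1 ∧ j = 0)) →
      Wtil i j = W j i * pst i / pst j)
    (k : ℕ) (c : Fin (k + 1) → Fin (m + 3))
    (hcyc : c (Fin.last k) = c 0)
    (hdist : ∀ s : Fin k, c s.castSucc ≠ c s.succ)
    (hnoedge : ∀ s : Fin k,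
      ¬((c s.castSucc = 0 ∧ c s.succ = 1) ∨ (c s.castSucc = 1 ∧ c s.succ = 0)))
    (hposfwd : ∀ s : Fin k, 0 < W (c s.succ) (c s.castSucc))
    (hposbwd : ∀ s : Fin k, 0 < W (c s.castSucc) (c s.succ)) :
    ∑ s : Fin k, Real.log (Wtil (c s.succ) (c s.castSucc) /
        Wtil (c s.castSucc) (c s.succ)) =
    - ∑ s : Fin k, Real.log (W (c s.succ) (c s.castSucc) /
        W (c s.castSucc) (c s.succ)) :=
  HTR_cycle_affinity_reversal_general W Wtil pst hpst hWtil k c hcyc hdist hnoedge hposfwd hposbwd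
end

section
/- The tilted matrices M(q) of W and M̃(F̃ − q) of the HTR generator W̃ are similar matrices, hence have the same characteristic polynomial and the same spectrum; in particular their largest real eigenvalues agree: λ(q) = λ̃(F̃ − q) for all q (the marginal Lebowitz–Spohn symmetry of the scaled cumulant generating functions). -/
/-!
Conjugating by `Pst = diagonal pst` and transposing turns `W` into the HTR generator off the
driven link `{0, 1}`, while the diagonal is untouched. On the link, the stalling generator
vanishes, so `W̃` keeps the rates of `W`, and the choice of `F̃` makes
`pst 0 * W 1 0 * exp (F̃ - q) / pst 1 = W 0 1 * exp (-q)`. Hence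
`M̃(q) = Pst * M(F̃ - q)ᵀ * Pst⁻¹`, and similar matrices share characteristic polynomial and
spectrum.
-/

open Matrix Real

noncomputable section

namespace Matrix

variable {n R : Type*} [Fintype n] [DecidableEq n]

theorem spectrum_eq_of_charpoly_eq [CommRing R] {A B : Matrix n n R}
    (h : A.charpoly = B.charpoly) : spectrum R A = spectrum R B := by
  ext r
  simp only [mem_spectrum_iff_not_isUnit_eval_charpoly, h]

theorem charpoly_diagonal_mul_transpose_mul_diagonal_inv [Field R] {d : n → R}
    (hd : ∀ i, d i ≠ 0) (A : Matrix n n R) :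
    (diagonal d * Aᵀ * diagonal (fun i => (d i)⁻¹)).charpoly = A.charpoly := by
  have hinv : diagonal (fun i => (d i)⁻¹) * diagonal d = 1 := by
    rw [diagonal_mul_diagonal, ← diagonal_one]
    exact congrArg diagonal (funext fun i => inv_mul_cancel₀ (hd i))
  rw [charpoly_mul_comm, ← Matrix.mul_assoc, hinv, Matrix.one_mul, charpoly_transpose]

def tilted (A : Matrix n n ℝ) (a b : n) (q : ℝ) : Matrix n n ℝ :=
  of fun i j =>
    if i = a ∧ j = b then A a b * exp (-q)
    else if i = b ∧ j = a then A b a * exp q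
    else A i j

def htr (W Wst : Matrix n n ℝ) (p : n → ℝ) : Matrix n n ℝ :=
  W - Wst + diagonal p * Wstᵀ * diagonal (fun i => (p i)⁻¹)

theorem htr_apply (W Wst : Matrix n n ℝ) (p : n → ℝ) (i j : n) :
    htr W Wst p i j = W i j - Wst i j + p i * Wst j i * (p j)⁻¹ := by
  simp [htr, mul_diagonal, diagonal_mul]

theorem tilted_htr_eq_conj_transpose {W Wst : Matrix n n ℝ} {p : n → ℝ} {a b : n} {F : ℝ}
    (hab : a ≠ b) (hp : ∀ i, p i ≠ 0) (hWst_ab : Wst a b = 0) (hWst_ba : Wst b a = 0)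
    (hWst : ∀ i j, i ≠ j → ¬(i = a ∧ j = b) → ¬(i = b ∧ j = a) → Wst i j = W i j)
    (hF : exp F * W b a * p a = W a b * p b) (q : ℝ) :
    tilted (htr W Wst p) a b q =
      diagonal p * (tilted W a b (F - q))ᵀ * diagonal (fun i => (p i)⁻¹) := by
  ext i j
  simp only [tilted, htr_apply, mul_diagonal, diagonal_mul, transpose_apply, of_apply]
  by_cases hij : i = a ∧ j = b
  · obtain ⟨rfl, rfl⟩ := hij
    simp only [and_self, if_true, hab.symm, false_and, if_false, hWst_ab, hWst_ba]
    rw [Real.exp_sub, Real.exp_neg]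
    field_simp [hp i, hp j]
    linear_combination -hF
  by_cases hji : i = b ∧ j = a
  · obtain ⟨rfl, rfl⟩ := hji
    simp only [and_self, if_true, hab.symm, hab, if_false, hWst_ab, hWst_ba]
    rw [Real.exp_neg, Real.exp_sub]
    field_simp [hp i, hp j]
    linear_combination hF
  rw [if_neg hij, if_neg hji, if_neg (fun h => hji ⟨h.2, h.1⟩),
    if_neg (fun h => hij ⟨h.2, h.1⟩)]
  by_cases hdiag : i = j
  · subst hdiag
    field_simp [hp i]
    ring
  · rw [hWst i j hdiag hij hji,
      hWst j i (Ne.symm hdiag) (fun h => hji ⟨h.2, h.1⟩) (fun h => hij ⟨h.2, h.1⟩)]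
    ring

end Matrix

end

theorem marginal_lebowitz_spohn_general {m : ℕ}
    (W Wst Wtil : Matrix (Fin (m + 3)) (Fin (m + 3)) ℝ)
    (h12pos : 0 < W 0 1) (h21pos : 0 < W 1 0)
    (h12 : Wst 0 1 = 0) (h21 : Wst 1 0 = 0)
    (hother : ∀ i j : Fin (m + 3),
      ¬((i = 0 ∧ j = 1) ∨ (i = 1 ∧ j = 0) ∨ (i = 0 ∧ j = 0) ∨ (i = 1 ∧ j = 1)) →
      Wst i j = W i j)
    (pst : Fin (m + 3) → ℝ) (hpst : ∀ i, 0 < pst i)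
    (hWtil : Wtil = W - Wst + Matrix.diagonal pst * Wst.transpose *
        Matrix.diagonal (fun i => (pst i)⁻¹))
    (M Mt : ℝ → Matrix (Fin (m + 3)) (Fin (m + 3)) ℝ)
    (hM : ∀ q, M q = Matrix.of fun i j =>
      if i = 0 ∧ j = 1 then W 0 1 * Real.exp (-q)
      else if i = 1 ∧ j = 0 then W 1 0 * Real.exp q
      else W i j)
    (hMt : ∀ q, Mt q = Matrix.of fun i j =>
      if i = 0 ∧ j = 1 then Wtil 0 1 * Real.exp (-q)
      else if i = 1 ∧ j = 0 then Wtil 1 0 * Real.exp q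
      else Wtil i j)
    (F : ℝ) (hF : F = Real.log (W 0 1 * pst 1 / (W 1 0 * pst 0))) :
    ∀ q : ℝ,
      (Mt q).charpoly = (M (F - q)).charpoly ∧
      spectrum ℝ (Mt q) = spectrum ℝ (M (F - q)) ∧
      sSup (spectrum ℝ (Mt q)) = sSup (spectrum ℝ (M (F - q))) := by
  intro q
  have hp : ∀ i, pst i ≠ 0 := fun i => (hpst i).ne'
  have hexpF : exp F * W 1 0 * pst 0 = W 0 1 * pst 1 := by
    rw [hF, exp_log (div_pos (mul_pos h12pos (hpst 1)) (mul_pos h21pos (hpst 0)))]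
    field_simp [h21pos.ne', hp 0]
  have hWst : ∀ i j, i ≠ j → ¬(i = 0 ∧ j = 1) → ¬(i = 1 ∧ j = 0) → Wst i j = W i j :=
    fun i j hij h01 h10 => hother i j (by grind)
  have hsim : Mt q = diagonal pst * (M (F - q))ᵀ * diagonal (fun i => (pst i)⁻¹) := by
    rw [hMt, hM, hWtil]
    exact tilted_htr_eq_conj_transpose (by simp) hp h12 h21 hWst hexpF q
  have hcharpoly : (Mt q).charpoly = (M (F - q)).charpoly := by
    rw [hsim, charpoly_diagonal_mul_transpose_mul_diagonal_inv hp]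
  have hspectrum := spectrum_eq_of_charpoly_eq hcharpoly
  exact ⟨hcharpoly, hspectrum, by rw [hspectrum]⟩

/-- marginal Lebowitz–Spohn symmetry: the tilted matrices
`M̃(q)` of the HTR generator and `M(F̃ − q)` of `W` are similar (via `Pst` and
transposition), hence have equal characteristic polynomials and equal spectra;
in particular their largest real eigenvalues agree: `λ̃(q) = λ(F̃ − q)`. -/
theorem marginal_lebowitz_spohn {m : ℕ}
    (W Wst Wtil : Matrix (Fin (m + 3)) (Fin (m + 3)) ℝ)
    (hoff : ∀ i j : Fin (m + 3), i ≠ j → 0 ≤ W i j)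
    (hcol : ∀ j : Fin (m + 3), ∑ i : Fin (m + 3), W i j = 0)
    (h12pos : 0 < W 0 1) (h21pos : 0 < W 1 0)
    (h12 : Wst 0 1 = 0) (h21 : Wst 1 0 = 0)
    (h11 : Wst 0 0 = W 0 0 + W 1 0) (h22 : Wst 1 1 = W 1 1 + W 0 1)
    (hother : ∀ i j : Fin (m + 3),
      ¬((i = 0 ∧ j = 1) ∨ (i = 1 ∧ j = 0) ∨ (i = 0 ∧ j = 0) ∨ (i = 1 ∧ j = 1)) →
      Wst i j = W i j)
    (pst : Fin (m + 3) → ℝ) (hpst : ∀ i, 0 < pst i)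
    (hsteady : Wst.mulVec pst = 0)
    (hWtil : Wtil = W - Wst + Matrix.diagonal pst * Wst.transpose *
        Matrix.diagonal (fun i => (pst i)⁻¹))
    (M Mt : ℝ → Matrix (Fin (m + 3)) (Fin (m + 3)) ℝ)
    (hM : ∀ q, M q = Matrix.of fun i j =>
      if i = 0 ∧ j = 1 then W 0 1 * Real.exp (-q)
      else if i = 1 ∧ j = 0 then W 1 0 * Real.exp q
      else W i j)
    (hMt : ∀ q, Mt q = Matrix.of fun i j =>
      if i = 0 ∧ j = 1 then Wtil 0 1 * Real.exp (-q)
      else if i = 1 ∧ j = 0 then Wtil 1 0 * Real.exp q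
      else Wtil i j)
    (F : ℝ) (hF : F = Real.log (W 0 1 * pst 1 / (W 1 0 * pst 0))) :
    ∀ q : ℝ,
      (Mt q).charpoly = (M (F - q)).charpoly ∧
      spectrum ℝ (Mt q) = spectrum ℝ (M (F - q)) ∧
      sSup (spectrum ℝ (Mt q)) = sSup (spectrum ℝ (M (F - q))) :=
  marginal_lebowitz_spohn_general W Wst Wtil h12pos h21pos h12 h21 hother pst hpst hWtil M Mt hM hMt
    F hF
end

section
/- Let λ(q, x) be a family of smooth convex functions of q parametrized by x, satisfying the symmetry λ(q, x) = λ̃(F̃(x) − q, x) with F̃(x) = x − x^st, and λ(0,x) = λ(F̃(x), x) = 0. Suppose additionally that at x = x^st forward and HTR coincide, λ(·, x^st) = λ̃(·, x^st). Define ⟨φ⟩(x) = −∂_q λ(0,x) and var(φ)(x) = ∂_q² λ(0,x). Then at stalling, ∂_x ⟨φ⟩(x^st) = var(φ)(x^st)/2 (the fluctuation–dissipation relation at stalling). -/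
private lemma hasDerivAt_comp_curve {E : Type*} [NormedAddCommGroup E] [NormedSpace ℝ E]
    (φ : ℝ × ℝ → E) (hφ : Differentiable ℝ φ) (c : ℝ → ℝ × ℝ) (c' : ℝ × ℝ) (x : ℝ)
    (hc : HasDerivAt c c' x) :
    HasDerivAt (fun t => φ (c t)) (fderiv ℝ φ (c x) c') x :=
  (hφ (c x)).hasFDerivAt.comp_hasDerivAt x hc

/-- fluctuation–dissipation relation at stalling: for a smooth
family `λ(q,x)`, convex in `q`, satisfying the marginal symmetry
`λ(q,x) = λ̃(F̃(x) − q, x)` with `F̃(x) = x − x_st`, the normalizations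
`λ(0,x) = λ(F̃(x),x) = 0`, and coincidence of forward and HTR at stalling,
the response of the mean current `⟨φ⟩(x) = −∂_q λ(0,x)` at the stalling point
equals half the scaled variance `∂_q² λ(0,x_st)`. -/
theorem FDR_at_stalling (lam lamt : ℝ → ℝ → ℝ) (xst : ℝ)
    (hsmooth : ContDiff ℝ (⊤ : ℕ∞) (fun p : ℝ × ℝ => lam p.1 p.2))
    (hsmootht : ContDiff ℝ (⊤ : ℕ∞) (fun p : ℝ × ℝ => lamt p.1 p.2))
    (hconv : ∀ x : ℝ, ConvexOn ℝ Set.univ (fun q => lam q x))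
    (hsym : ∀ q x : ℝ, lam q x = lamt (x - xst - q) x)
    (h0 : ∀ x : ℝ, lam 0 x = 0)
    (hF : ∀ x : ℝ, lam (x - xst) x = 0)
    (hstall : ∀ q : ℝ, lam q xst = lamt q xst) :
    deriv (fun x => -(deriv (fun q => lam q x) 0)) xst =
      (iteratedDeriv 2 (fun q => lam q xst) 0) / 2 := by
  set f : ℝ × ℝ → ℝ := fun p => lam p.1 p.2 with hf
  have hfd : Differentiable ℝ f := hsmooth.differentiable (by simp)
  have hDf : ContDiff ℝ (⊤ : ℕ∞) (fderiv ℝ f) :=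
    hsmooth.fderiv_right (by simp)
  have hDfd : Differentiable ℝ (fderiv ℝ f) := hDf.differentiable (by simp)
  set S : (ℝ × ℝ) →L[ℝ] ((ℝ × ℝ) →L[ℝ] ℝ) := fderiv ℝ (fderiv ℝ f) (0, xst) with hS
  -- symmetry of the second derivative
  have hsymm : ∀ v w : ℝ × ℝ, S v w = S w v := by
    intro v w
    exact second_derivative_symmetric (fun y => (hfd y).hasFDerivAt)
      (hDfd (0, xst)).hasFDerivAt v w
  -- curves
  have hc0 : ∀ x : ℝ, HasDerivAt (fun y : ℝ => ((0 : ℝ), y)) (((0 : ℝ), (1 : ℝ))) x :=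
    fun x => (hasDerivAt_const x (0 : ℝ)).prodMk (hasDerivAt_id x)
  have hc1 : ∀ x : ℝ, HasDerivAt (fun y : ℝ => (y - xst, y)) (((1 : ℝ), (1 : ℝ))) x :=
    fun x => ((hasDerivAt_id x).sub_const xst).prodMk (hasDerivAt_id x)
  have hc2 : ∀ x q : ℝ, HasDerivAt (fun s : ℝ => (s, x)) (((1 : ℝ), (0 : ℝ))) q :=
    fun x q => (hasDerivAt_id q).prodMk (hasDerivAt_const q x)
  -- partial derivative in q at (q, x)
  have hpartq : ∀ x q : ℝ, HasDerivAt (fun s => lam s x) (fderiv ℝ f (q, x) (1, 0)) q := by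
    intro x q
    exact hasDerivAt_comp_curve f hfd (fun s => (s, x)) (1, 0) q (hc2 x q)
  -- from h0 : the x-partial vanishes on the axis q = 0
  have hax : ∀ x : ℝ, fderiv ℝ f ((0 : ℝ), x) (0, 1) = 0 := by
    intro x
    have h := hasDerivAt_comp_curve f hfd (fun y : ℝ => ((0 : ℝ), y)) (0, 1) x (hc0 x)
    have heq : (fun y : ℝ => f ((0 : ℝ), y)) = fun _ : ℝ => (0 : ℝ) :=
      funext fun y => h0 y
    rw [heq] at h
    exact h.unique (hasDerivAt_const x 0)
  -- from hF : the (1,1)-directional derivative vanishes along the stalling curve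
  have hdiag : ∀ x : ℝ, fderiv ℝ f (x - xst, x) ((1 : ℝ), (1 : ℝ)) = 0 := by
    intro x
    have h := hasDerivAt_comp_curve f hfd (fun y : ℝ => (y - xst, y)) (1, 1) x (hc1 x)
    have heq : (fun y : ℝ => f (y - xst, y)) = fun _ : ℝ => (0 : ℝ) :=
      funext fun y => hF y
    rw [heq] at h
    exact h.unique (hasDerivAt_const x 0)
  -- second derivative along the stalling curve : S (1,1) (1,1) = 0
  have h11 : S (1, 1) (1, 1) = 0 := by
    have h := hasDerivAt_comp_curve (fun p => fderiv ℝ f p ((1 : ℝ), (1 : ℝ)))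
      (fun p => (ContinuousLinearMap.apply ℝ ℝ ((1 : ℝ), (1 : ℝ))).differentiableAt.comp p
        (hDfd p)) (fun y : ℝ => (y - xst, y)) (1, 1) xst (hc1 xst)
    have heq : (fun y : ℝ => fderiv ℝ f (y - xst, y) ((1 : ℝ), (1 : ℝ))) =
        fun _ : ℝ => (0 : ℝ) := funext fun y => hdiag y
    have hval : fderiv ℝ (fun p => fderiv ℝ f p ((1 : ℝ), (1 : ℝ))) (xst - xst, xst)
        ((1 : ℝ), (1 : ℝ)) = S (1, 1) (1, 1) := by
      have : (fun p : ℝ × ℝ => fderiv ℝ f p ((1 : ℝ), (1 : ℝ))) =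
          (ContinuousLinearMap.apply ℝ ℝ ((1 : ℝ), (1 : ℝ))) ∘ fderiv ℝ f := rfl
      rw [this, fderiv_comp _ (ContinuousLinearMap.apply ℝ ℝ (1, 1)).differentiableAt
        (hDfd _), (ContinuousLinearMap.apply ℝ ℝ ((1 : ℝ), (1 : ℝ))).fderiv]
      simp [hS]
    rw [heq] at h
    have := h.unique (hasDerivAt_const xst 0)
    rw [hval] at this
    exact this.symm ▸ rfl
  -- second derivative along the axis : S (0,1) (0,1) = 0
  have h22 : S (0, 1) (0, 1) = 0 := by
    have h := hasDerivAt_comp_curve (fun p => fderiv ℝ f p ((0 : ℝ), (1 : ℝ)))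
      (fun p => (ContinuousLinearMap.apply ℝ ℝ ((0 : ℝ), (1 : ℝ))).differentiableAt.comp p
        (hDfd p)) (fun y : ℝ => ((0 : ℝ), y)) (0, 1) xst (hc0 xst)
    have heq : (fun y : ℝ => fderiv ℝ f ((0 : ℝ), y) ((0 : ℝ), (1 : ℝ))) =
        fun _ : ℝ => (0 : ℝ) := funext fun y => hax y
    have hval : fderiv ℝ (fun p => fderiv ℝ f p ((0 : ℝ), (1 : ℝ))) ((0 : ℝ), xst)
        ((0 : ℝ), (1 : ℝ)) = S (0, 1) (0, 1) := by
      have : (fun p : ℝ × ℝ => fderiv ℝ f p ((0 : ℝ), (1 : ℝ))) =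
          (ContinuousLinearMap.apply ℝ ℝ ((0 : ℝ), (1 : ℝ))) ∘ fderiv ℝ f := rfl
      rw [this, fderiv_comp _ (ContinuousLinearMap.apply ℝ ℝ (0, 1)).differentiableAt
        (hDfd _), (ContinuousLinearMap.apply ℝ ℝ ((0 : ℝ), (1 : ℝ))).fderiv]
      simp [hS]
    rw [heq] at h
    have := h.unique (hasDerivAt_const xst 0)
    rw [hval] at this
    exact this.symm ▸ rfl
  -- LHS : the mean-current response is -S (0,1) (1,0)
  have hmean : (fun x : ℝ => -(deriv (fun q => lam q x) 0)) =
      fun x : ℝ => -(fderiv ℝ f ((0 : ℝ), x) ((1 : ℝ), (0 : ℝ))) :=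
    funext fun x => by rw [(hpartq x 0).deriv]
  have hLHS : deriv (fun x => -(deriv (fun q => lam q x) 0)) xst = -(S (0, 1) (1, 0)) := by
    rw [hmean]
    have h := hasDerivAt_comp_curve (fun p => fderiv ℝ f p ((1 : ℝ), (0 : ℝ)))
      (fun p => (ContinuousLinearMap.apply ℝ ℝ ((1 : ℝ), (0 : ℝ))).differentiableAt.comp p
        (hDfd p)) (fun y : ℝ => ((0 : ℝ), y)) (0, 1) xst (hc0 xst)
    have hval : fderiv ℝ (fun p => fderiv ℝ f p ((1 : ℝ), (0 : ℝ))) ((0 : ℝ), xst)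
        ((0 : ℝ), (1 : ℝ)) = S (0, 1) (1, 0) := by
      have : (fun p : ℝ × ℝ => fderiv ℝ f p ((1 : ℝ), (0 : ℝ))) =
          (ContinuousLinearMap.apply ℝ ℝ ((1 : ℝ), (0 : ℝ))) ∘ fderiv ℝ f := rfl
      rw [this, fderiv_comp _ (ContinuousLinearMap.apply ℝ ℝ (1, 0)).differentiableAt
        (hDfd _), (ContinuousLinearMap.apply ℝ ℝ ((1 : ℝ), (0 : ℝ))).fderiv]
      simp [hS]
    rw [hval] at h
    exact h.neg.deriv
  -- RHS : the scaled variance is S (1,0) (1,0)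
  have hvar : iteratedDeriv 2 (fun q => lam q xst) 0 = S (1, 0) (1, 0) := by
    rw [show (2 : ℕ) = 1 + 1 from rfl, iteratedDeriv_succ, iteratedDeriv_one]
    have hder : deriv (fun q => lam q xst) =
        fun q : ℝ => fderiv ℝ f (q, xst) ((1 : ℝ), (0 : ℝ)) :=
      funext fun q => (hpartq xst q).deriv
    rw [hder]
    have h := hasDerivAt_comp_curve (fun p => fderiv ℝ f p ((1 : ℝ), (0 : ℝ)))
      (fun p => (ContinuousLinearMap.apply ℝ ℝ ((1 : ℝ), (0 : ℝ))).differentiableAt.comp p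
        (hDfd p)) (fun s : ℝ => (s, xst)) (1, 0) 0 (hc2 xst 0)
    have hval : fderiv ℝ (fun p => fderiv ℝ f p ((1 : ℝ), (0 : ℝ))) ((0 : ℝ), xst)
        ((1 : ℝ), (0 : ℝ)) = S (1, 0) (1, 0) := by
      have : (fun p : ℝ × ℝ => fderiv ℝ f p ((1 : ℝ), (0 : ℝ))) =
          (ContinuousLinearMap.apply ℝ ℝ ((1 : ℝ), (0 : ℝ))) ∘ fderiv ℝ f := rfl
      rw [this, fderiv_comp _ (ContinuousLinearMap.apply ℝ ℝ (1, 0)).differentiableAt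
        (hDfd _), (ContinuousLinearMap.apply ℝ ℝ ((1 : ℝ), (0 : ℝ))).fderiv]
      simp [hS]
    rw [hval] at h
    exact h.deriv
  -- algebra : expand S (1,1) (1,1) and conclude
  have hexp : S (1, 1) (1, 1) =
      S (1, 0) (1, 0) + S (1, 0) (0, 1) + S (0, 1) (1, 0) + S (0, 1) (0, 1) := by
    have hv : ((1 : ℝ), (1 : ℝ)) = ((1 : ℝ), (0 : ℝ)) + ((0 : ℝ), (1 : ℝ)) := by
      simp [Prod.ext_iff]
    rw [hv]
    simp only [map_add, ContinuousLinearMap.add_apply]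
    ring
  have hsy : S (1, 0) (0, 1) = S (0, 1) (1, 0) := hsymm _ _
  rw [hLHS, hvar]
  have : S (1, 0) (1, 0) + 2 * S (0, 1) (1, 0) = 0 := by
    rw [h11, h22] at hexp; linarith [hexp, hsy]
  linarith
end

section
/- Let W and W̃ be two Markov generators on n states with identical diagonals (equal exit rates), equal (1,2) and (2,1) entries, and W̃_{ij} = W_{ji} p^st_i/p^st_j for all other off-diagonal pairs. For any finite sequence of states i_0, i_1, …, i_N with i_N = i_0 and consecutive states distinct, the ratio of products of transition rates satisfies ∏_{n} W_{i_{n+1} i_n} / ∏_n W̃_{i_{n+1} i_n} = exp( −F̃ φ ) · ∏_n ( W_{i_{n+1} i_n} / W_{i_n i_{n+1}} ), where φ is the net number of 2→1 minus 1→2 transitions in the sequence and F̃ = log(W_{12} p^st_2/(W_{21} p^st_1)). -/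
/-! Away from the edge `{1, 2}` (states `0, 1` here), `W̃` is the `p^st`-time reversal of `W`,
so each jump `i → j` contributes `W_{ji} / W_{ij}` times `p^st_i / p^st_j`; on that edge
`W̃ = W`, and the missing factor is exactly `exp(∓F̃)`. Around a closed path the `p^st`
factors telescope to `1`. -/

open Finset

theorem Fin.prod_succ_eq_prod_castSucc_of_apply_last_eq {M : Type*} [CommMonoid M]
    {N : ℕ} (g : Fin (N + 1) → M) (hg : g (Fin.last N) = g 0) :
    ∏ s : Fin N, g s.succ = ∏ s : Fin N, g s.castSucc := by
  cases N with
  | zero => rfl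
  | succ k =>
    rw [Fin.prod_univ_castSucc (fun s => g s.succ), Fin.prod_univ_succ (fun s => g s.castSucc),
      Fin.succ_last, hg, mul_comm]
    rfl

theorem rate_div_rateTil_eq {ι : Type*} [DecidableEq ι] {W Wtil : Matrix ι ι ℝ} {pst : ι → ℝ}
    {a b : ι} (hpst : ∀ i, 0 < pst i) (hab : a ≠ b)
    (hWtilab : Wtil a b = W a b) (hWtilba : Wtil b a = W b a)
    (hWtil : ∀ i j, i ≠ j → ¬((i = a ∧ j = b) ∨ (i = b ∧ j = a)) →
      Wtil i j = W j i * pst i / pst j)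
    {i j : ι} (hij : i ≠ j) (hfwd : 0 < W j i) (hbwd : 0 < W i j) :
    W j i / Wtil j i =
      Real.exp (-Real.log (W a b * pst b / (W b a * pst a)) *
          ((if j = a ∧ i = b then (1 : ℝ) else 0) - (if j = b ∧ i = a then (1 : ℝ) else 0))) *
        (W j i / W i j) * (pst i / pst j) := by
  have hpi := hpst i
  have hpj := hpst j
  by_cases hba : j = a ∧ i = b
  · obtain ⟨rfl, rfl⟩ := hba
    have hX : 0 < W j i * pst i / (W i j * pst j) := by positivity
    rw [if_pos ⟨rfl, rfl⟩, if_neg (fun h => hab h.2.symm), hWtilab, sub_zero, mul_one,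
      Real.exp_neg, Real.exp_log hX]
    field_simp
  by_cases hab' : j = b ∧ i = a
  · obtain ⟨rfl, rfl⟩ := hab'
    have hX : 0 < W i j * pst j / (W j i * pst i) := by positivity
    rw [if_neg hba, if_pos ⟨rfl, rfl⟩, hWtilba, zero_sub, mul_neg_one, neg_neg, Real.exp_log hX]
    field_simp
  rw [if_neg hba, if_neg hab', sub_zero, mul_zero, Real.exp_zero, one_mul,
    hWtil j i hij.symm (by tauto)]
  field_simp

theorem trajectory_ratio_identity_general {m : ℕ}
    (W Wtil : Matrix (Fin (m + 3)) (Fin (m + 3)) ℝ)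
    (pst : Fin (m + 3) → ℝ) (hpst : ∀ i, 0 < pst i)
    (hWtil12 : Wtil 0 1 = W 0 1) (hWtil21 : Wtil 1 0 = W 1 0)
    (hWtil : ∀ i j : Fin (m + 3), i ≠ j →
      ¬((i = 0 ∧ j = 1) ∨ (i = 1 ∧ j = 0)) →
      Wtil i j = W j i * pst i / pst j)
    (N : ℕ) (c : Fin (N + 1) → Fin (m + 3))
    (hcyc : c (Fin.last N) = c 0)
    (hdist : ∀ s : Fin N, c s.castSucc ≠ c s.succ)
    (hposfwd : ∀ s : Fin N, 0 < W (c s.succ) (c s.castSucc))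
    (hposbwd : ∀ s : Fin N, 0 < W (c s.castSucc) (c s.succ)) :
    (∏ s : Fin N, W (c s.succ) (c s.castSucc)) /
      (∏ s : Fin N, Wtil (c s.succ) (c s.castSucc)) =
    Real.exp (-(Real.log (W 0 1 * pst 1 / (W 1 0 * pst 0))) *
        (∑ s : Fin N,
          ((if c s.succ = 0 ∧ c s.castSucc = 1 then (1 : ℝ) else 0) -
           (if c s.succ = 1 ∧ c s.castSucc = 0 then (1 : ℝ) else 0)))) *
      ∏ s : Fin N, (W (c s.succ) (c s.castSucc) / W (c s.castSucc) (c s.succ)) := by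
  have hpst_closed : ∏ s : Fin N, pst (c s.castSucc) / pst (c s.succ) = 1 := by
    rw [prod_div_distrib, Fin.prod_succ_eq_prod_castSucc_of_apply_last_eq (fun i => pst (c i))
      (congrArg pst hcyc)]
    exact div_self (prod_ne_zero_iff.2 fun s _ => (hpst _).ne')
  rw [← prod_div_distrib, prod_congr rfl fun s _ => rate_div_rateTil_eq hpst zero_ne_one hWtil12
    hWtil21 hWtil (hdist s) (hposfwd s) (hposbwd s), prod_mul_distrib, prod_mul_distrib,
    hpst_closed, mul_one, mul_sum, Real.exp_sum]

/-- trajectory-level identity, core of Theorem 3: for a cyclic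
sequence of states, the ratio of path weights under `W` and the HTR generator
`W̃` equals `exp(−F̃ φ)` times the ratio of forward and backward path weights
of `W`, where `φ` is the net number of `2 → 1` transitions (index `1` to
index `0`) and `F̃ = log(W₁₂ pst₂/(W₂₁ pst₁))`. -/
theorem trajectory_ratio_identity {m : ℕ}
    (W Wtil : Matrix (Fin (m + 3)) (Fin (m + 3)) ℝ)
    (pst : Fin (m + 3) → ℝ) (hpst : ∀ i, 0 < pst i)
    (h12pos : 0 < W 0 1) (h21pos : 0 < W 1 0)
    (hdiag : ∀ i : Fin (m + 3), Wtil i i = W i i)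
    (hWtil12 : Wtil 0 1 = W 0 1) (hWtil21 : Wtil 1 0 = W 1 0)
    (hWtil : ∀ i j : Fin (m + 3), i ≠ j →
      ¬((i = 0 ∧ j = 1) ∨ (i = 1 ∧ j = 0)) →
      Wtil i j = W j i * pst i / pst j)
    (N : ℕ) (c : Fin (N + 1) → Fin (m + 3))
    (hcyc : c (Fin.last N) = c 0)
    (hdist : ∀ s : Fin N, c s.castSucc ≠ c s.succ)
    (hposfwd : ∀ s : Fin N, 0 < W (c s.succ) (c s.castSucc))
    (hposbwd : ∀ s : Fin N, 0 < W (c s.castSucc) (c s.succ)) :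
    (∏ s : Fin N, W (c s.succ) (c s.castSucc)) /
      (∏ s : Fin N, Wtil (c s.succ) (c s.castSucc)) =
    Real.exp (-(Real.log (W 0 1 * pst 1 / (W 1 0 * pst 0))) *
        (∑ s : Fin N,
          ((if c s.succ = 0 ∧ c s.castSucc = 1 then (1 : ℝ) else 0) -
           (if c s.succ = 1 ∧ c s.castSucc = 0 then (1 : ℝ) else 0)))) *
      ∏ s : Fin N, (W (c s.succ) (c s.castSucc) / W (c s.castSucc) (c s.succ)) :=
  trajectory_ratio_identity_general W Wtil pst hpst hWtil12 hWtil21 hWtil N c hcyc hdist hposfwd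
    hposbwd
end
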